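/- Let C ∈ ℝ^{n₁×n₂×n₃} and D ∈ ℝ^{n₁×l×n₃}. For any initial tensor X₁ ∈ ℝ^{n₂×l×n₃}, the iteration of Algorithm 3 is well defined while its residuals are nonzero (whenever R_k ≠ 0 one has Q_k ≠ 0), and there exists k ≤ n₂·l·n₃ + 1 such that R_k = 0, i.e., Cᵀ⋆C⋆X_k = Cᵀ⋆D; consequently X_k minimizes ‖C⋆X − D‖ over all X ∈ ℝ^{n₂×l×n₃}. -/

import Mathlib

open Matrix Filter Topology

noncomputable section

/-- A third-order real tensor of size `n₁ × n₂ × n₃`, identified with the family of its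
frontal slices indexed by `ZMod n₃`. -/
abbrev Tensor (n₁ n₂ n₃ : ℕ) := ZMod n₃ → Matrix (Fin n₁) (Fin n₂) ℝ

/-- The T-product of third-order tensors: `(C ⋆ D)(k) = ∑ j, C (k - j) * D j`. -/
def tProd {n₁ n₂ l n₃ : ℕ} [NeZero n₃] (C : Tensor n₁ n₂ n₃) (D : Tensor n₂ l n₃) :
    Tensor n₁ l n₃ :=
  fun k => ∑ j : ZMod n₃, C (k - j) * D j

/-- The tensor transpose: `(Cᵀ)(k) = (C (-k))ᵀ`. -/
def tTrans {n₁ n₂ n₃ : ℕ} (C : Tensor n₁ n₂ n₃) : Tensor n₂ n₁ n₃ :=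
  fun k => (C (-k))ᵀ

/-- The matrix trace of the first frontal slice of a tensor with square slices. -/
def trFirst {m n₃ : ℕ} (S : Tensor m m n₃) : ℝ :=
  (S 0).trace

/-- The inner product `⟨C, D⟩ = ∑ k i j, C k i j * D k i j`. -/
def tInner {n₁ n₂ n₃ : ℕ} [NeZero n₃] (C D : Tensor n₁ n₂ n₃) : ℝ :=
  ∑ k : ZMod n₃, ∑ i : Fin n₁, ∑ j : Fin n₂, C k i j * D k i j

/-- The Frobenius norm `‖C‖ = √⟨C, C⟩`. -/
def tNorm {n₁ n₂ n₃ : ℕ} [NeZero n₃] (C : Tensor n₁ n₂ n₃) : ℝ :=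
  Real.sqrt (tInner C C)

/-- The block circulant matrix of a tensor: its `(k, l)` block is `C (k - l)`. -/
def bCirc {n n₃ : ℕ} [NeZero n₃] (C : Tensor n n n₃) :
    Matrix (ZMod n₃ × Fin n) (ZMod n₃ × Fin n) ℝ :=
  fun p q => C (p.1 - q.1) p.2 q.2

/-- `C` is T-symmetric positive definite: `Cᵀ = C` and `bCirc C` is positive definite. -/
def TSymPD {n n₃ : ℕ} [NeZero n₃] (C : Tensor n n n₃) : Prop :=
  tTrans C = C ∧ (bCirc C).PosDef

/-!
Algorithm 3 is a conjugate-gradient iteration for the normal equations `CᵀC X = CᵀD`.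
By a joint induction, the residuals `R_k` are mutually orthogonal and so are the directions
`Q_k`. A nonzero residual forces a nonzero direction: `Q_k = CᵀC Z_k` for some `Z_k` in the range
of `Cᵀ`, on which `CᵀC` is injective, and `Z_k - R_k` is a combination of earlier residuals, so
`⟨Z_k, R_k⟩ = ‖R_k‖²`. Orthogonal nonzero residuals are linearly independent, so one of the first
`n₂ l n₃ + 1` vanishes, and a solution of the normal equations minimises `‖C ⋆ X - D‖` by
Pythagoras. Tensors enter through the isometry with Euclidean space under which `X ↦ C ⋆ X` has
adjoint `X ↦ Cᵀ ⋆ X`.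
-/

open scoped InnerProductSpace
open Module

variable {E F : Type*} [NormedAddCommGroup E] [InnerProductSpace ℝ E] [FiniteDimensional ℝ E]
  [NormedAddCommGroup F] [InnerProductSpace ℝ F] [FiniteDimensional ℝ F]

namespace LinearMap

theorem inner_adjoint_comp_self_apply (T : E →ₗ[ℝ] F) (u v : E) :
    ⟪adjoint T (T u), v⟫_ℝ = ⟪u, adjoint T (T v)⟫_ℝ := by
  rw [adjoint_inner_left, adjoint_inner_right]

theorem eq_zero_of_mem_range_adjoint_of_adjoint_apply_eq_zero {T : E →ₗ[ℝ] F} {z : E}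
    (hz : z ∈ range (adjoint T)) (h : adjoint T (T z) = 0) : z = 0 := by
  have hker : z ∈ ker T := by rw [← ker_adjoint_comp_self]; exact h
  rw [← orthogonal_ker] at hz
  exact inner_self_eq_zero.mp (Submodule.inner_right_of_mem_orthogonal hker hz)

theorem norm_apply_sub_le_of_adjoint_apply_eq {T : E →ₗ[ℝ] F} {b : F} {x : E}
    (h : adjoint T (T x) = adjoint T b) (y : E) : ‖T x - b‖ ≤ ‖T y - b‖ := by
  have hsplit : T y - b = (T x - b) + T (y - x) := by rw [map_sub]; abel
  have horth : ⟪T x - b, T (y - x)⟫_ℝ = 0 := by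
    rw [← adjoint_inner_left, map_sub, h, sub_self, inner_zero_left]
  have hpyth := norm_add_sq_eq_norm_sq_add_norm_sq_real horth
  rw [hsplit]
  nlinarith [norm_nonneg (T x - b), norm_nonneg (T x - b + T (y - x)),
    mul_self_nonneg ‖T (y - x)‖]

end LinearMap

open LinearMap

/-- Algorithm 3 for `min ‖T x - b‖`, with the iterations indexed from `0` instead of `1`. -/
structure IsNormalCG (T : E →ₗ[ℝ] F) (b : F) (x r p q : ℕ → E) : Prop where
  r_eq : ∀ i, r i = adjoint T b - adjoint T (T (x i))
  p_eq : ∀ i, p i = adjoint T (T (r i))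
  q_zero : q 0 = p 0
  x_succ : ∀ i, x (i + 1) = x i + (‖r i‖ ^ 2 / ‖q i‖ ^ 2) • q i
  q_succ : ∀ i, q (i + 1) = p (i + 1) - (⟪p (i + 1), q i⟫_ℝ / ‖q i‖ ^ 2) • q i

namespace IsNormalCG

variable {T : E →ₗ[ℝ] F} {b : F} {x r p q : ℕ → E}

theorem r_succ (h : IsNormalCG T b x r p q) (i : ℕ) :
    r (i + 1) = r i - (‖r i‖ ^ 2 / ‖q i‖ ^ 2) • adjoint T (T (q i)) := by
  rw [h.r_eq (i + 1), h.x_succ, map_add, map_add, map_smul, map_smul, sub_add_eq_sub_sub,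
    ← h.r_eq]

theorem r_succ_eq_zero (h : IsNormalCG T b x r p q) {i : ℕ} (hr : r i = 0) :
    r (i + 1) = 0 := by
  simp [h.r_succ, hr]

theorem r_ne_zero_of_le (h : IsNormalCG T b x r p q) {i k : ℕ} (hik : i ≤ k)
    (hr : r k ≠ 0) : r i ≠ 0 := by
  intro hri
  induction k, hik using Nat.le_induction with
  | base => exact hr hri
  | succ k _ ih => exact ih fun hrk => hr (h.r_succ_eq_zero hrk)

theorem p_succ (h : IsNormalCG T b x r p q) (i : ℕ) :
    p (i + 1) = q (i + 1) + (⟪p (i + 1), q i⟫_ℝ / ‖q i‖ ^ 2) • q i := by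
  rw [h.q_succ]
  abel

theorem inner_q_succ (h : IsNormalCG T b x r p q) (i : ℕ) : ⟪q (i + 1), q i⟫_ℝ = 0 := by
  rcases eq_or_ne (q i) 0 with hq | hq
  · rw [hq, inner_zero_right]
  · rw [h.q_succ, inner_sub_left, real_inner_smul_left, real_inner_self_eq_norm_sq,
      div_mul_cancel₀ _ (pow_ne_zero 2 (norm_ne_zero_iff.mpr hq)), sub_self]

theorem inner_q_p (h : IsNormalCG T b x r p q) (i : ℕ) : ⟪q i, p i⟫_ℝ = ‖q i‖ ^ 2 := by
  cases i with
  | zero => rw [← h.q_zero, real_inner_self_eq_norm_sq]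
  | succ i =>
    rw [h.p_succ, inner_add_right, real_inner_smul_right, h.inner_q_succ, mul_zero, add_zero,
      real_inner_self_eq_norm_sq]

theorem inner_p_q_of_lt (h : IsNormalCG T b x r p q) {i k : ℕ} (hik : i < k)
    (hqq : ∀ j < k, ⟪q j, q k⟫_ℝ = 0) : ⟪p i, q k⟫_ℝ = 0 := by
  cases i with
  | zero => rw [← h.q_zero, hqq 0 hik]
  | succ i =>
    rw [h.p_succ, inner_add_left, real_inner_smul_left, hqq _ hik, hqq i (by omega), mul_zero,
      add_zero]

theorem r_mem_range (h : IsNormalCG T b x r p q) (i : ℕ) : r i ∈ range (adjoint T) := by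
  rw [h.r_eq]
  exact sub_mem (mem_range_self _ _) (mem_range_self _ _)

theorem exists_q_eq (h : IsNormalCG T b x r p q) (i : ℕ) :
    ∃ z ∈ range (adjoint T), q i = adjoint T (T z) ∧
      z - r i ∈ Submodule.span ℝ (r '' Set.Iio i) := by
  induction i with
  | zero => exact ⟨r 0, h.r_mem_range 0, by rw [h.q_zero, h.p_eq], by simp⟩
  | succ i ih =>
    obtain ⟨z, hz, hqz, hzr⟩ := ih
    set β := ⟪p (i + 1), q i⟫_ℝ / ‖q i‖ ^ 2
    refine ⟨r (i + 1) - β • z, sub_mem (h.r_mem_range _) (Submodule.smul_mem _ _ hz), ?_, ?_⟩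
    · rw [h.q_succ, map_sub, map_sub, map_smul, map_smul, ← hqz, ← h.p_eq]
    · have hmono : Submodule.span ℝ (r '' Set.Iio i) ≤ Submodule.span ℝ (r '' Set.Iio (i + 1)) :=
        Submodule.span_mono (Set.image_mono (Set.Iio_subset_Iio (Nat.le_succ i)))
      have hri : r i ∈ Submodule.span ℝ (r '' Set.Iio (i + 1)) :=
        Submodule.subset_span ⟨i, Set.mem_Iio.mpr (Nat.lt_succ_self i), rfl⟩
      have : r (i + 1) - β • z - r (i + 1) = -β • ((z - r i) + r i) := by
        rw [sub_add_cancel, neg_smul]; abel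
      rw [this]
      exact Submodule.smul_mem _ _ (add_mem (hmono hzr) hri)

theorem q_ne_zero_of_inner (h : IsNormalCG T b x r p q) {i : ℕ}
    (hrr : ∀ j < i, ⟪r j, r i⟫_ℝ = 0) (hr : r i ≠ 0) : q i ≠ 0 := by
  obtain ⟨z, hz, hqz, hzr⟩ := h.exists_q_eq i
  have hperp : ⟪z - r i, r i⟫_ℝ = 0 := by
    refine Submodule.span_induction ?_ ?_ ?_ ?_ hzr
    · rintro _ ⟨j, hj, rfl⟩
      exact hrr j hj
    · exact inner_zero_left _
    · intro u v _ _ hu hv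
      rw [inner_add_left, hu, hv, add_zero]
    · intro c u _ hu
      rw [real_inner_smul_left, hu, mul_zero]
  intro hq
  rw [eq_zero_of_mem_range_adjoint_of_adjoint_apply_eq_zero hz (hqz ▸ hq), zero_sub,
    inner_neg_left, neg_eq_zero, real_inner_self_eq_norm_sq] at hperp
  exact hr (norm_eq_zero.mp (pow_eq_zero_iff two_ne_zero |>.mp hperp))

theorem inner_r_r_succ (h : IsNormalCG T b x r p q) {i k : ℕ} (hik : i ≤ k)
    (hrr : ∀ j < k, ⟪r j, r k⟫_ℝ = 0) (hqq : ∀ j < k, ⟪q j, q k⟫_ℝ = 0) (hq : q k ≠ 0) :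
    ⟪r i, r (k + 1)⟫_ℝ = 0 := by
  rw [h.r_succ, inner_sub_right, real_inner_smul_right, ← inner_adjoint_comp_self_apply,
    ← h.p_eq]
  rcases hik.lt_or_eq with hik | rfl
  · rw [hrr i hik, h.inner_p_q_of_lt hik hqq, mul_zero, sub_zero]
  · rw [real_inner_comm (q i), h.inner_q_p, real_inner_self_eq_norm_sq,
      div_mul_cancel₀ _ (pow_ne_zero 2 (norm_ne_zero_iff.mpr hq)), sub_self]

theorem inner_q_q_succ (h : IsNormalCG T b x r p q) {i k : ℕ} (hik : i ≤ k)
    (hrr : ∀ j < k + 1, ⟪r j, r (k + 1)⟫_ℝ = 0) (hqq : ∀ j < k, ⟪q j, q k⟫_ℝ = 0)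
    (hrq : ∀ j < k, r j ≠ 0 ∧ q j ≠ 0) : ⟪q i, q (k + 1)⟫_ℝ = 0 := by
  rcases hik.lt_or_eq with hik | rfl
  · have hα : ‖r i‖ ^ 2 / ‖q i‖ ^ 2 ≠ 0 :=
      div_ne_zero (pow_ne_zero 2 (norm_ne_zero_iff.mpr (hrq i hik).1))
        (pow_ne_zero 2 (norm_ne_zero_iff.mpr (hrq i hik).2))
    have hAq : ⟪adjoint T (T (q i)), r (k + 1)⟫_ℝ = 0 := by
      refine (mul_eq_zero.mp ?_).resolve_left hα
      rw [← real_inner_smul_left, ← sub_sub_cancel (r i) (_ • _), ← h.r_succ, inner_sub_left,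
        hrr i (by omega), hrr (i + 1) (by omega), sub_zero]
    rw [h.q_succ, inner_sub_right, real_inner_smul_right, hqq i hik, mul_zero, sub_zero, h.p_eq,
      ← inner_adjoint_comp_self_apply, hAq]
  · rw [real_inner_comm, h.inner_q_succ]

theorem inner_eq_zero_of_lt (h : IsNormalCG T b x r p q) {k : ℕ} (hr : ∀ i < k, r i ≠ 0)
    {i j : ℕ} (hij : i < j) (hjk : j ≤ k) : ⟪r i, r j⟫_ℝ = 0 ∧ ⟪q i, q j⟫_ℝ = 0 := by
  induction k generalizing i j with
  | zero => omega
  | succ k ih =>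
    have ih' : ∀ {i j : ℕ}, i < j → j ≤ k → ⟪r i, r j⟫_ℝ = 0 ∧ ⟪q i, q j⟫_ℝ = 0 :=
      ih fun i hi => hr i (by omega)
    rcases Nat.lt_or_ge j (k + 1) with hj | hj
    · exact ih' hij (by omega)
    obtain rfl : j = k + 1 := by omega
    have hq : ∀ m ≤ k, q m ≠ 0 := fun m hm =>
      h.q_ne_zero_of_inner (fun j hj => (ih' hj hm).1) (hr m (by omega))
    have hrr : ∀ m < k + 1, ⟪r m, r (k + 1)⟫_ℝ = 0 := fun m hm =>
      h.inner_r_r_succ (by omega) (fun j hj => (ih' hj le_rfl).1)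
        (fun j hj => (ih' hj le_rfl).2) (hq k le_rfl)
    exact ⟨hrr i hij, h.inner_q_q_succ (by omega) hrr (fun j hj => (ih' hj le_rfl).2)
      fun j hj => ⟨hr j (by omega), hq j (by omega)⟩⟩

theorem q_ne_zero (h : IsNormalCG T b x r p q) {k : ℕ} (hr : r k ≠ 0) : q k ≠ 0 :=
  h.q_ne_zero_of_inner
    (fun _ hj => (h.inner_eq_zero_of_lt (fun _ hi => h.r_ne_zero_of_le hi.le hr) hj le_rfl).1) hr

theorem exists_r_eq_zero (h : IsNormalCG T b x r p q) : ∃ k ≤ finrank ℝ E, r k = 0 := by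
  by_contra! hr
  have horth {i j : ℕ} (hij : i < j) (hj : j ≤ finrank ℝ E) : ⟪r i, r j⟫_ℝ = 0 :=
    (h.inner_eq_zero_of_lt (fun m hm => hr m (by omega)) hij hj).1
  have hli : LinearIndependent ℝ fun i : Fin (finrank ℝ E + 1) => r i := by
    refine linearIndependent_of_ne_zero_of_inner_eq_zero (fun i => hr i (by omega)) ?_
    intro i j hij
    rcases (Fin.val_ne_of_ne hij).lt_or_gt with hlt | hlt
    · exact horth hlt (by omega)
    · rw [real_inner_comm]
      exact horth hlt (by omega)
  simpa using hli.fintype_card_le_finrank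

end IsNormalCG

namespace Tensor

variable {n₁ n₂ n₃ : ℕ}

def toEuclideanSpace : Tensor n₁ n₂ n₃ ≃ₗ[ℝ] EuclideanSpace ℝ (ZMod n₃ × Fin n₁ × Fin n₂) where
  toFun U := WithLp.toLp 2 fun p => U p.1 p.2.1 p.2.2
  invFun v k i j := v (k, i, j)
  map_add' _ _ := rfl
  map_smul' _ _ := rfl
  left_inv _ := rfl
  right_inv _ := rfl

@[simp]
theorem toEuclideanSpace_apply (U : Tensor n₁ n₂ n₃) (p : ZMod n₃ × Fin n₁ × Fin n₂) :
    toEuclideanSpace U p = U p.1 p.2.1 p.2.2 :=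
  rfl

variable [NeZero n₃]

theorem inner_toEuclideanSpace (U V : Tensor n₁ n₂ n₃) :
    ⟪toEuclideanSpace U, toEuclideanSpace V⟫_ℝ = tInner U V := by
  simp [PiLp.inner_apply, tInner, Fintype.sum_prod_type, mul_comm]

theorem norm_sq_toEuclideanSpace (U : Tensor n₁ n₂ n₃) :
    ‖toEuclideanSpace U‖ ^ 2 = tInner U U := by
  rw [← real_inner_self_eq_norm_sq, inner_toEuclideanSpace]

theorem norm_toEuclideanSpace (U : Tensor n₁ n₂ n₃) : ‖toEuclideanSpace U‖ = tNorm U := by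
  rw [norm_eq_sqrt_real_inner, inner_toEuclideanSpace, tNorm]

theorem finrank_euclideanSpace_eq_mul :
    finrank ℝ (EuclideanSpace ℝ (ZMod n₃ × Fin n₁ × Fin n₂)) = n₁ * n₂ * n₃ := by
  simp only [_root_.finrank_euclideanSpace, Fintype.card_prod, ZMod.card, Fintype.card_fin]
  ring

end Tensor

open Tensor

section

variable {n₁ n₂ l n₃ : ℕ}

theorem tTrans_tTrans (A : Tensor n₁ n₂ n₃) : tTrans (tTrans A) = A := by
  funext k
  simp only [tTrans, neg_neg, transpose_transpose]

variable [NeZero n₃]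

theorem tInner_eq_sum_trace (U V : Tensor n₁ n₂ n₃) :
    tInner U V = ∑ k, ((U k)ᵀ * V k).trace := by
  simp only [tInner, Matrix.trace, Matrix.diag, mul_apply, transpose_apply]
  exact Finset.sum_congr rfl fun _ _ => Finset.sum_comm

theorem tInner_tProd (A : Tensor n₁ n₂ n₃) (X : Tensor n₂ l n₃) (Y : Tensor n₁ l n₃) :
    tInner (tProd A X) Y = tInner X (tProd (tTrans A) Y) := by
  simp only [tInner_eq_sum_trace, tProd, tTrans, transpose_sum, Matrix.sum_mul, Matrix.mul_sum,
    trace_sum, transpose_mul, Matrix.mul_assoc, neg_sub]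
  exact Finset.sum_comm

theorem trFirst_tProd_tTrans (A B : Tensor n₁ n₂ n₃) :
    trFirst (tProd (tTrans A) B) = tInner A B := by
  simp only [trFirst, tProd, tTrans, tInner_eq_sum_trace, trace_sum, zero_sub, neg_neg]

def tProdLinear (A : Tensor n₁ n₂ n₃) : Tensor n₂ l n₃ →ₗ[ℝ] Tensor n₁ l n₃ where
  toFun := tProd A
  map_add' X Y := by
    funext k
    simp only [tProd, Pi.add_apply, Matrix.mul_add, Finset.sum_add_distrib]
  map_smul' c X := by
    funext k
    simp only [tProd, Pi.smul_apply, Matrix.mul_smul, Finset.smul_sum, RingHom.id_apply]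

def tProdEuclidean (A : Tensor n₁ n₂ n₃) :
    EuclideanSpace ℝ (ZMod n₃ × Fin n₂ × Fin l) →ₗ[ℝ]
      EuclideanSpace ℝ (ZMod n₃ × Fin n₁ × Fin l) :=
  toEuclideanSpace.arrowCongr toEuclideanSpace (tProdLinear A)

@[simp]
theorem tProdEuclidean_toEuclideanSpace (A : Tensor n₁ n₂ n₃) (X : Tensor n₂ l n₃) :
    tProdEuclidean A (toEuclideanSpace X) = toEuclideanSpace (tProd A X) := by
  simp [tProdEuclidean, tProdLinear]

theorem adjoint_tProdEuclidean (A : Tensor n₁ n₂ n₃) :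
    adjoint (tProdEuclidean (l := l) A) = tProdEuclidean (tTrans A) := by
  refine ((eq_adjoint_iff _ _).mpr fun u v => ?_).symm
  obtain ⟨U, rfl⟩ := toEuclideanSpace.surjective u
  obtain ⟨V, rfl⟩ := toEuclideanSpace.surjective v
  rw [tProdEuclidean_toEuclideanSpace, tProdEuclidean_toEuclideanSpace, inner_toEuclideanSpace,
    inner_toEuclideanSpace, tInner_tProd, tTrans_tTrans]

end

theorem stmt_17 (n₁ n₂ l n₃ : ℕ) [NeZero n₃] (C : Tensor n₁ n₂ n₃)
    (D : Tensor n₁ l n₃)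
    (X R P Q : ℕ → Tensor n₂ l n₃)
    (hR : ∀ i, 1 ≤ i → R i = tProd (tTrans C) D - tProd (tTrans C) (tProd C (X i)))
    (hP : ∀ i, 1 ≤ i → P i = tProd (tTrans C) (tProd C (R i)))
    (hQ1 : Q 1 = P 1)
    (hX : ∀ i, 1 ≤ i → X (i + 1) = X i +
      (tInner (R i) (R i) / tInner (Q i) (Q i)) • Q i)
    (hQ : ∀ i, 1 ≤ i → Q (i + 1) = P (i + 1) -
      (trFirst (tProd (tTrans (P (i + 1))) (Q i)) / tInner (Q i) (Q i)) • Q i)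
    :
    (∀ k, 1 ≤ k → R k ≠ 0 → Q k ≠ 0) ∧
    ∃ k, 1 ≤ k ∧ k ≤ n₂ * l * n₃ + 1 ∧ R k = 0 ∧
      tProd (tTrans C) (tProd C (X k)) = tProd (tTrans C) D ∧
      ∀ X' : Tensor n₂ l n₃,
        tNorm (tProd C (X k) - D) ≤ tNorm (tProd C X' - D) := by
  have hcg : IsNormalCG (tProdEuclidean C) (toEuclideanSpace D)
      (fun i => toEuclideanSpace (X (i + 1))) (fun i => toEuclideanSpace (R (i + 1)))
      (fun i => toEuclideanSpace (P (i + 1))) (fun i => toEuclideanSpace (Q (i + 1))) :=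
    { r_eq := fun i => by simp [adjoint_tProdEuclidean, hR (i + 1) (by omega)]
      p_eq := fun i => by simp [adjoint_tProdEuclidean, hP (i + 1) (by omega)]
      q_zero := by rw [hQ1]
      x_succ := fun i => by simp [norm_sq_toEuclideanSpace, hX (i + 1) (by omega)]
      q_succ := fun i => by
        simp [norm_sq_toEuclideanSpace, inner_toEuclideanSpace, hQ (i + 1) (by omega),
          trFirst_tProd_tTrans] }
  refine ⟨fun k hk hRk => ?_, ?_⟩
  · obtain ⟨k, rfl⟩ := Nat.exists_eq_add_of_le' hk
    simpa using hcg.q_ne_zero (by simpa using hRk)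
  obtain ⟨k, hk, hr⟩ := hcg.exists_r_eq_zero
  rw [finrank_euclideanSpace_eq_mul] at hk
  have hRk : R (k + 1) = 0 := by simpa using hr
  have hnormal : tProd (tTrans C) (tProd C (X (k + 1))) = tProd (tTrans C) D :=
    (sub_eq_zero.mp ((hR _ (by omega)).symm.trans hRk)).symm
  refine ⟨k + 1, by omega, by omega, hRk, hnormal, fun X' => ?_⟩
  have hls := LinearMap.norm_apply_sub_le_of_adjoint_apply_eq (T := tProdEuclidean C)
    (b := toEuclideanSpace D) (x := toEuclideanSpace (X (k + 1)))
    (by simp [adjoint_tProdEuclidean, hnormal]) (toEuclideanSpace X')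
  simpa [← map_sub, norm_toEuclideanSpace] using hls
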